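/- arXiv:2110.00577 — 2 statements merged into one kernel-verified Lean document; each statement's English description precedes it below -/
import Mathlib

section
/- (Kelly's Lemma) Let G₁ and G₂ be finite simple graphs, each on n vertices, with the same deck. Then for every finite simple graph H with |V(H)| < n, ν(H, G₁) = ν(H, G₂). -/
/-!
Double count the pairs `(v, S)` where `S` spans an induced copy of `H` in `G` and `v ∉ S`. Each
copy is avoided by `|V(G)| - |V(H)|` vertices, and the copies avoiding `v` are exactly the copies
in the card `G - v`, so `(|V(G)| - |V(H)|) · ν(H, G) = ∑ᵥ ν(H, G - v)`. The right-hand side is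
determined by the deck, and the factor is positive when `|V(H)| < |V(G)|`.
-/

/-- `subgraphCount H G` is `ν(H, G)`: the number of vertex subsets `S` of `G` with
`|S| = |V(H)|` such that the induced subgraph `G[S]` is isomorphic to `H`. -/
noncomputable def subgraphCount {α β : Type*} (H : SimpleGraph α) (G : SimpleGraph β) : ℕ :=
  Nat.card {s : Finset β // s.card = Nat.card α ∧ Nonempty (G.induce (↑s : Set β) ≃g H)}

/-- Two graphs have the same deck if there is a bijection `σ` between their vertex sets
such that `G₁ - v` is isomorphic to `G₂ - σ(v)` for every vertex `v`. -/
def SameDeck {V₁ V₂ : Type*} (G₁ : SimpleGraph V₁) (G₂ : SimpleGraph V₂) : Prop :=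
  ∃ σ : V₁ ≃ V₂, ∀ v : V₁,
    Nonempty (G₁.induce ({v}ᶜ : Set V₁) ≃g G₂.induce ({σ v}ᶜ : Set V₂))

open Finset

theorem Finset.sum_card_filter_notMem_of_card_eq {α : Type*} [Fintype α] [DecidableEq α]
    {𝒜 : Finset (Finset α)} {k : ℕ} (h𝒜 : ∀ s ∈ 𝒜, #s = k) :
    ∑ a, #{s ∈ 𝒜 | a ∉ s} = (Fintype.card α - k) * #𝒜 := by
  calc ∑ a, #{s ∈ 𝒜 | a ∉ s}
      = ∑ s ∈ 𝒜, #{a | a ∉ s} :=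
        sum_card_bipartiteAbove_eq_sum_card_bipartiteBelow (fun a s => a ∉ s)
    _ = ∑ s ∈ 𝒜, (Fintype.card α - k) := by
        refine sum_congr rfl fun s hs => ?_
        rw [← h𝒜 s hs, ← card_compl]
        congr 1
        ext a
        simp
    _ = (Fintype.card α - k) * #𝒜 := by rw [sum_const, smul_eq_mul, mul_comm]

namespace SimpleGraph

variable {V V' U : Type*} {G : SimpleGraph V} {G' : SimpleGraph V'}

def InducesCopy (G : SimpleGraph V) (H : SimpleGraph U) (s : Finset V) : Prop :=
  #s = Nat.card U ∧ Nonempty (G.induce (s : Set V) ≃g H)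

noncomputable def Embedding.induceImageIso (f : G ↪g G') (s : Set V) :
    G.induce s ≃g G'.induce (f '' s) where
  toEquiv := Equiv.Set.image f s f.injective
  map_rel_iff' := f.map_adj_iff

theorem inducesCopy_map_iff (f : G ↪g G') (H : SimpleGraph U) (s : Finset V) :
    G'.InducesCopy H (s.map f.toEmbedding) ↔ G.InducesCopy H s := by
  rw [InducesCopy, InducesCopy, card_map, coe_map]
  exact and_congr_right fun _ =>
    ⟨fun ⟨ψ⟩ => ⟨(f.induceImageIso s).trans ψ⟩, fun ⟨ψ⟩ => ⟨(f.induceImageIso s).symm.trans ψ⟩⟩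

end SimpleGraph

section SubgraphCount

open SimpleGraph

variable {V V' U : Type*} {G : SimpleGraph V} {G' : SimpleGraph V'}

theorem subgraphCount_eq_natCard (G : SimpleGraph V) (H : SimpleGraph U) :
    subgraphCount H G = Nat.card {s : Finset V // G.InducesCopy H s} := rfl

theorem subgraphCount_congr (φ : G ≃g G') (H : SimpleGraph U) :
    subgraphCount H G = subgraphCount H G' :=
  Nat.card_congr <| φ.toEquiv.finsetCongr.subtypeEquiv fun s =>
    (inducesCopy_map_iff φ.toEmbedding H s).symm

theorem subgraphCount_induce (A : Set V) (H : SimpleGraph U) :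
    subgraphCount H (G.induce A) =
      Nat.card {s : Finset V // (∀ a ∈ s, a ∈ A) ∧ G.InducesCopy H s} :=
  Nat.card_congr <| ((Equiv.finsetSubtypeComm (· ∈ A)).subtypeEquiv fun s =>
    (inducesCopy_map_iff (Embedding.induce A) H s).symm).trans
    (Equiv.subtypeSubtypeEquivSubtypeInter _ _)

theorem sum_subgraphCount_induce_compl [Fintype V] (G : SimpleGraph V) (H : SimpleGraph U) :
    ∑ v, subgraphCount H (G.induce {v}ᶜ) = (Fintype.card V - Nat.card U) * subgraphCount H G := by
  classical
  have hcard (P : Finset V → Prop) : Nat.card {s // P s} = #{s | P s} := by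
    rw [Nat.card_eq_fintype_card, Fintype.card_subtype]
  calc ∑ v, subgraphCount H (G.induce {v}ᶜ)
      = ∑ v, #{s ∈ {s | G.InducesCopy H s} | v ∉ s} := sum_congr rfl fun v _ => by
        rw [subgraphCount_induce, hcard, filter_filter]
        congr 1
        ext s
        simp only [mem_filter, mem_univ, true_and, Set.mem_compl_singleton_iff]
        grind
    _ = (Fintype.card V - Nat.card U) * subgraphCount H G := by
        rw [sum_card_filter_notMem_of_card_eq fun s hs => (mem_filter.1 hs).2.1,
          subgraphCount_eq_natCard, hcard]

theorem SameDeck.sum_subgraphCount_eq {V₁ V₂ : Type*} [Fintype V₁] [Fintype V₂]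
    {G₁ : SimpleGraph V₁} {G₂ : SimpleGraph V₂} (hdeck : SameDeck G₁ G₂) (H : SimpleGraph U) :
    ∑ v, subgraphCount H (G₁.induce {v}ᶜ) = ∑ w, subgraphCount H (G₂.induce {w}ᶜ) := by
  obtain ⟨σ, hσ⟩ := hdeck
  exact Fintype.sum_equiv σ _ _ fun v => subgraphCount_congr (hσ v).some H

end SubgraphCount

/-- Kelly's Lemma: if `G₁` and `G₂` are graphs on `n` vertices with the same deck, then
`ν(H, G₁) = ν(H, G₂)` for every graph `H` on fewer than `n` vertices. -/
theorem kelly_lemma {V₁ V₂ : Type*} [Fintype V₁] [Fintype V₂]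
    (G₁ : SimpleGraph V₁) (G₂ : SimpleGraph V₂) (n : ℕ)
    (h₁ : Fintype.card V₁ = n) (h₂ : Fintype.card V₂ = n)
    (hdeck : SameDeck G₁ G₂) :
    ∀ (U : Type*) [Fintype U] (H : SimpleGraph U), Fintype.card U < n →
      subgraphCount H G₁ = subgraphCount H G₂ := by
  intro U _ H hU
  have hsum := hdeck.sum_subgraphCount_eq H
  rw [sum_subgraphCount_induce_compl, sum_subgraphCount_induce_compl, h₁, h₂] at hsum
  rw [← Nat.card_eq_fintype_card] at hU
  exact Nat.eq_of_mul_eq_mul_left (Nat.sub_pos_of_lt hU) hsum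
end

section
/- (Degree sequence is reconstructible) Let G be a finite simple graph. For every vertex v of G, deg_G(v) = |E(G)| − |E(G − v)|. Consequently, if G₁ and G₂ are finite simple graphs on n ≥ 3 vertices with the same deck witnessed by a bijection σ : V(G₁) → V(G₂), then deg_{G₁}(v) = deg_{G₂}(σ(v)) for every vertex v of G₁; in particular the multisets of vertex degrees of G₁ and G₂ coincide. -/
lemma edge_split (V : Type) [Fintype V] (G : SimpleGraph V) (v : V) :
    Nat.card G.edgeSet =
      Nat.card (G.induce ({v}ᶜ : Set V)).edgeSet + Nat.card (G.neighborSet v) := by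
  classical
  have hinj : Function.Injective (Sym2.map (Subtype.val : ({v}ᶜ : Set V) → V)) :=
    Sym2.map.injective Subtype.val_injective
  have himg : Sym2.map (Subtype.val : ({v}ᶜ : Set V) → V) ''
      (G.induce ({v}ᶜ : Set V)).edgeSet = G.edgeSet \ G.incidenceSet v := by
    ext e
    constructor
    · rintro ⟨e', he', rfl⟩
      induction e' using Sym2.ind with
      | _ a b =>
        obtain ⟨a, ha⟩ := a
        obtain ⟨b, hb⟩ := b
        simp only [SimpleGraph.mem_edgeSet, SimpleGraph.comap_adj] at he'
        refine ⟨he', ?_⟩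
        simp only [SimpleGraph.incidenceSet, Set.mem_setOf_eq, Sym2.map_pair_eq,
          Sym2.mem_iff, not_and, not_or]
        intro _
        constructor
        · rintro rfl; exact ha rfl
        · rintro rfl; exact hb rfl
    · rintro ⟨he, hni⟩
      induction e using Sym2.ind with
      | _ a b =>
        simp only [SimpleGraph.incidenceSet, Set.mem_setOf_eq, Sym2.mem_iff] at hni
        push_neg at hni
        obtain ⟨hva, hvb⟩ := hni he
        refine ⟨s(⟨a, fun h => hva (by simpa using h.symm)⟩,
          ⟨b, fun h => hvb (by simpa using h.symm)⟩), ?_, by simp⟩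
        simpa using he
  have hsub : G.incidenceSet v ⊆ G.edgeSet := G.incidenceSet_subset v
  have hdecomp : G.edgeSet = (G.edgeSet \ G.incidenceSet v) ∪ G.incidenceSet v :=
    (Set.diff_union_of_subset hsub).symm
  rw [Nat.card_coe_set_eq, hdecomp,
    Set.ncard_union_eq Set.disjoint_sdiff_left (Set.toFinite _) (Set.toFinite _)]
  congr 1
  · rw [← himg, Set.ncard_image_of_injective _ hinj, Nat.card_coe_set_eq]
  · rw [← Nat.card_coe_set_eq]
    exact Nat.card_congr (G.incidenceSetEquivNeighborSet v)

lemma handshake' (V : Type) [Fintype V] (G : SimpleGraph V) :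
    ∑ v, Nat.card (G.neighborSet v) = 2 * Nat.card G.edgeSet := by
  classical
  have := G.sum_degrees_eq_twice_card_edges
  simp only [Nat.card_eq_fintype_card, SimpleGraph.card_neighborSet_eq_degree]
  rw [this, SimpleGraph.edgeFinset, Set.toFinset_card]

/-- The degree sequence is reconstructible: for every graph `G` and vertex `v`,
`deg_G(v) = |E(G)| - |E(G - v)|`; consequently, if `G₁` and `G₂` are graphs on `n ≥ 3`
vertices whose same-deck property is witnessed by a bijection `σ`, then
`deg_{G₁}(v) = deg_{G₂}(σ(v))` for every vertex `v`, and in particular the multisets of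
vertex degrees of `G₁` and `G₂` coincide. -/
theorem degree_sequence_reconstructible :
    (∀ (V : Type) [Fintype V] (G : SimpleGraph V) (v : V),
      Nat.card (G.neighborSet v) =
        Nat.card G.edgeSet - Nat.card (G.induce ({v}ᶜ : Set V)).edgeSet) ∧
    (∀ (V₁ V₂ : Type) [Fintype V₁] [Fintype V₂]
      (G₁ : SimpleGraph V₁) (G₂ : SimpleGraph V₂) (n : ℕ),
      Fintype.card V₁ = n → Fintype.card V₂ = n → 3 ≤ n →
      ∀ σ : V₁ ≃ V₂,
        (∀ v : V₁,
          Nonempty (G₁.induce ({v}ᶜ : Set V₁) ≃g G₂.induce ({σ v}ᶜ : Set V₂))) →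
        (∀ v : V₁, Nat.card (G₁.neighborSet v) = Nat.card (G₂.neighborSet (σ v))) ∧
        Multiset.map (fun v => Nat.card (G₁.neighborSet v)) (Finset.univ : Finset V₁).val =
          Multiset.map (fun w => Nat.card (G₂.neighborSet w)) (Finset.univ : Finset V₂).val) := by
  constructor
  · intro V _ G v
    have := edge_split V G v
    omega
  · intro V₁ V₂ _ _ G₁ G₂ n h₁ h₂ hn σ hdeck
    have hdel : ∀ v : V₁, Nat.card (G₁.induce ({v}ᶜ : Set V₁)).edgeSet =
        Nat.card (G₂.induce ({σ v}ᶜ : Set V₂)).edgeSet :=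
      fun v => Nat.card_congr (hdeck v).some.mapEdgeSet
    -- total edge counts
    set E₁ := Nat.card G₁.edgeSet with hE₁
    set E₂ := Nat.card G₂.edgeSet with hE₂
    have hsum₁ : ∑ v : V₁, Nat.card (G₁.induce ({v}ᶜ : Set V₁)).edgeSet + 2 * E₁ = n * E₁ := by
      have : ∑ v : V₁, (Nat.card (G₁.induce ({v}ᶜ : Set V₁)).edgeSet
          + Nat.card (G₁.neighborSet v)) = n * E₁ := by
        trans ∑ _v : V₁, E₁
        · exact Finset.sum_congr rfl fun v _ => (edge_split V₁ G₁ v).symm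
        · simp [Finset.sum_const, Finset.card_univ, h₁]
      rw [Finset.sum_add_distrib, handshake' V₁ G₁] at this
      omega
    have hsum₂ : ∑ w : V₂, Nat.card (G₂.induce ({w}ᶜ : Set V₂)).edgeSet + 2 * E₂ = n * E₂ := by
      have : ∑ w : V₂, (Nat.card (G₂.induce ({w}ᶜ : Set V₂)).edgeSet
          + Nat.card (G₂.neighborSet w)) = n * E₂ := by
        trans ∑ _w : V₂, E₂
        · exact Finset.sum_congr rfl fun w _ => (edge_split V₂ G₂ w).symm
        · simp [Finset.sum_const, Finset.card_univ, h₂]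
      rw [Finset.sum_add_distrib, handshake' V₂ G₂] at this
      omega
    have hsums : ∑ v : V₁, Nat.card (G₁.induce ({v}ᶜ : Set V₁)).edgeSet =
        ∑ w : V₂, Nat.card (G₂.induce ({w}ᶜ : Set V₂)).edgeSet :=
      Fintype.sum_equiv σ _ _ hdel
    have hE : E₁ = E₂ := by
      have h3 : (n - 2) * E₁ = (n - 2) * E₂ := by
        have e1 : (n - 2) * E₁ = ∑ v : V₁, Nat.card (G₁.induce ({v}ᶜ : Set V₁)).edgeSet := by
          have : (n - 2) * E₁ + 2 * E₁ = n * E₁ := by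
            rw [← Nat.add_mul]; congr 1; omega
          omega
        have e2 : (n - 2) * E₂ = ∑ w : V₂, Nat.card (G₂.induce ({w}ᶜ : Set V₂)).edgeSet := by
          have : (n - 2) * E₂ + 2 * E₂ = n * E₂ := by
            rw [← Nat.add_mul]; congr 1; omega
          omega
        rw [e1, e2, hsums]
      exact Nat.eq_of_mul_eq_mul_left (by omega) h3
    have hdeg : ∀ v : V₁, Nat.card (G₁.neighborSet v) = Nat.card (G₂.neighborSet (σ v)) := by
      intro v
      have k₁ := edge_split V₁ G₁ v
      have k₂ := edge_split V₂ G₂ (σ v)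
      have := hdel v
      omega
    refine ⟨hdeg, ?_⟩
    have huniv : (Finset.univ : Finset V₂).val =
        Multiset.map σ (Finset.univ : Finset V₁).val := by
      rw [← Finset.map_univ_equiv σ]
      rfl
    rw [huniv, Multiset.map_map]
    exact Multiset.map_congr rfl (fun v _ => hdeg v)
end
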